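/- arXiv:2302.10089 — 6 statements merged into one kernel-verified Lean document; each statement's English description precedes it below -/
import Mathlib

section
/- For any positive masses m₁, m₂, m₃, m₄ there is at most one normalized sequentially-ordered co-circular central configuration: if r and r' both belong to 𝒟 = {r ∈ 𝒢 : I(r) = 1, P(r) = 0, H(r) = 0} and each satisfies the co-circular central configuration equations for some real multipliers (λ, σ) and (λ', σ') respectively, then r = r'. -/
/-- The Cayley–Menger determinant of four points, as a function of the six
mutual distances `(r₁₂, r₁₃, r₁₄, r₂₃, r₂₄, r₃₄)`. -/
noncomputable def cayleyMenger (r12 r13 r14 r23 r24 r34 : ℝ) : ℝ :=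
  Matrix.det !![(0:ℝ), 1, 1, 1, 1;
                1, 0, r12^2, r13^2, r14^2;
                1, r12^2, 0, r23^2, r24^2;
                1, r13^2, r23^2, 0, r34^2;
                1, r14^2, r24^2, r34^2, 0]

/-- The Ptolemy function `P`. -/
def ptolemyFun (r12 r13 r14 r23 r24 r34 : ℝ) : ℝ :=
  r12*r34 + r14*r23 - r13*r24

/-- The moment of inertia `I` as a function of the mutual distances. -/
noncomputable def momentInertia (m1 m2 m3 m4 r12 r13 r14 r23 r24 r34 : ℝ) : ℝ :=
  (1/(2*(m1 + m2 + m3 + m4))) *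
    (m1*m2*r12^2 + m1*m3*r13^2 + m1*m4*r14^2 +
     m2*m3*r23^2 + m2*m4*r24^2 + m3*m4*r34^2)

/-- Membership in `𝒢`: all mutual distances are positive, the Cayley–Menger
determinant is nonnegative, and all strict triangle inequalities hold. -/
noncomputable def geomRealizable (r12 r13 r14 r23 r24 r34 : ℝ) : Prop :=
  0 < r12 ∧ 0 < r13 ∧ 0 < r14 ∧ 0 < r23 ∧ 0 < r24 ∧ 0 < r34 ∧
  0 ≤ cayleyMenger r12 r13 r14 r23 r24 r34 ∧
  r12 + r23 > r13 ∧ r12 + r13 > r23 ∧ r13 + r23 > r12 ∧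
  r12 + r24 > r14 ∧ r12 + r14 > r24 ∧ r14 + r24 > r12 ∧
  r13 + r34 > r14 ∧ r13 + r14 > r34 ∧ r14 + r34 > r13 ∧
  r23 + r34 > r24 ∧ r23 + r24 > r34 ∧ r24 + r34 > r23

/-- Membership in `𝒟 = {r ∈ 𝒢 : I(r) = 1, P(r) = 0, H(r) = 0}`. -/
noncomputable def memD (m1 m2 m3 m4 r12 r13 r14 r23 r24 r34 : ℝ) : Prop :=
  geomRealizable r12 r13 r14 r23 r24 r34 ∧
  momentInertia m1 m2 m3 m4 r12 r13 r14 r23 r24 r34 = 1 ∧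
  ptolemyFun r12 r13 r14 r23 r24 r34 = 0 ∧
  cayleyMenger r12 r13 r14 r23 r24 r34 = 0

/-- The co-circular central configuration equations with multipliers `lam`, `sig`. -/
def cocircularCCEqns (m1 m2 m3 m4 r12 r13 r14 r23 r24 r34 lam sig : ℝ) : Prop :=
  m1*m2*(1/r12^3 - lam) = sig * (r34/r12) ∧
  m3*m4*(1/r34^3 - lam) = sig * (r12/r34) ∧
  m1*m3*(1/r13^3 - lam) = -sig * (r24/r13) ∧
  m2*m4*(1/r24^3 - lam) = -sig * (r13/r24) ∧
  m1*m4*(1/r14^3 - lam) = sig * (r23/r14) ∧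
  m2*m3*(1/r23^3 - lam) = sig * (r14/r23)

/-!
Multiplying the equation for the pair `ij` by `r_ij²` turns the system into
`m_i m_j φ_λ(r_ij) = ±σ r_ij r_kl` with `φ_λ(t) = 1/t - λ t²`, and by Ptolemy's relation the
three equations at a vertex sum to zero. At vertex 1 this forces `λ > 0`, so a rescaling
normalizes `λ = 1`, and then `σ > 0` because otherwise Ptolemy's relation fails. For two
normalized solutions with `σ ≤ τ`, the strict monotonicity of `φ₁` forces the `τ`-solution
to have the shorter sides `12, 34, 14, 23` and, through the vertex sums, the longer diagonals
`13, 24`; Ptolemy's relation for both turns all these inequalities into equalities. The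
normalization `I = 1` then pins down the scale.
-/

namespace CocircularCC

open Set

noncomputable def phi (lam t : ℝ) : ℝ := 1 / t - lam * t ^ 2

lemma phi_strictAntiOn {lam : ℝ} (hlam : 0 ≤ lam) : StrictAntiOn (phi lam) (Ioi 0) := by
  intro a (ha : 0 < a) b _ hab
  have hinv : 1 / b < 1 / a := one_div_lt_one_div_of_lt ha hab
  have hsq : lam * a ^ 2 ≤ lam * b ^ 2 :=
    mul_le_mul_of_nonneg_left (pow_le_pow_left₀ ha.le hab.le 2) hlam
  unfold phi
  linarith

lemma phi_one_one : phi 1 1 = 0 := by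
  norm_num [phi]

lemma phi_pos {lam t : ℝ} (hlam : lam ≤ 0) (ht : 0 < t) : 0 < phi lam t := by
  have : 0 ≤ -lam * t ^ 2 := mul_nonneg (neg_nonneg.mpr hlam) (sq_nonneg t)
  have : 0 < 1 / t := one_div_pos.mpr ht
  unfold phi
  linarith

lemma phi_div_pow_three {lam c t : ℝ} (hc : c ≠ 0) :
    phi (lam / c ^ 3) (c * t) = phi lam t / c := by
  unfold phi
  field_simp

lemma one_le_of_mul_phi_one_eq {K t σ p : ℝ} (hK : 0 < K) (ht : 0 < t) (hp : 0 < p)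
    (hσ : σ ≤ 0) (h : K * phi 1 t = σ * p) : 1 ≤ t := by
  have hphi : phi 1 t ≤ phi 1 1 := by
    rw [phi_one_one]
    exact nonpos_of_mul_nonpos_right (h ▸ mul_nonpos_of_nonpos_of_nonneg hσ hp.le) hK
  exact ((phi_strictAntiOn zero_le_one).le_iff_ge ht (mem_Ioi.mpr one_pos)).mp hphi

lemma le_one_of_mul_phi_one_eq_neg {K t σ p : ℝ} (hK : 0 < K) (ht : 0 < t) (hp : 0 < p)
    (hσ : σ ≤ 0) (h : K * phi 1 t = -(σ * p)) : t ≤ 1 := by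
  have hphi : phi 1 1 ≤ phi 1 t := by
    rw [phi_one_one]
    exact nonneg_of_mul_nonneg_right
      (h ▸ neg_nonneg.mpr (mul_nonpos_of_nonpos_of_nonneg hσ hp.le)) hK
  exact ((phi_strictAntiOn zero_le_one).le_iff_ge (mem_Ioi.mpr one_pos) ht).mp hphi

lemma le_of_pair_eq {f : ℝ → ℝ} (hf : StrictAntiOn f (Ioi 0)) {A B s t a b c d : ℝ}
    (hA : 0 < A) (hB : 0 < B) (ha : 0 < a) (hb : 0 < b) (hc : 0 < c) (hd : 0 < d)
    (ht : 0 < t) (hst : s ≤ t)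
    (hAa : A * f a = s * (a * b)) (hBb : B * f b = s * (a * b))
    (hAc : A * f c = t * (c * d)) (hBd : B * f d = t * (c * d)) : c ≤ a := by
  by_contra! hac
  have hfc : A * f c < A * f a := mul_lt_mul_of_pos_left (hf ha hc hac) hA
  have hfd : B * f d < B * f b := by rwa [hBb, hBd, ← hAa, ← hAc]
  have hbd : b < d := (hf.lt_iff_gt hd hb).mp (lt_of_mul_lt_mul_left hfd hB.le)
  have hprod : a * b < c * d := mul_lt_mul'' hac hbd ha.le hb.le
  have : t * (c * d) < s * (a * b) := by rwa [← hAa, ← hAc]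
  nlinarith [mul_le_mul_of_nonneg_right hst (mul_pos ha hb).le]

lemma le_and_le_of_pair_eq {f : ℝ → ℝ} (hf : StrictAntiOn f (Ioi 0)) {A B s t a b c d : ℝ}
    (hA : 0 < A) (hB : 0 < B) (ha : 0 < a) (hb : 0 < b) (hc : 0 < c) (hd : 0 < d)
    (ht : 0 < t) (hst : s ≤ t)
    (hAa : A * f a = s * (a * b)) (hBb : B * f b = s * (a * b))
    (hAc : A * f c = t * (c * d)) (hBd : B * f d = t * (c * d)) : c ≤ a ∧ d ≤ b := by
  refine ⟨le_of_pair_eq hf hA hB ha hb hc hd ht hst hAa hBb hAc hBd, ?_⟩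
  rw [mul_comm a b] at hAa hBb
  rw [mul_comm c d] at hAc hBd
  exact le_of_pair_eq hf hB hA hb ha hd hc ht hst hBb hAa hBd hAc

lemma eq_and_eq_of_mul_le_mul {a b c d : ℝ} (ha : 0 < a) (hb : 0 < b) (hac : a ≤ c)
    (hbd : b ≤ d) (h : c * d ≤ a * b) : a = c ∧ b = d :=
  ⟨le_antisymm hac (by nlinarith), le_antisymm hbd (by nlinarith)⟩

@[ext]
structure Distances where
  r12 : ℝ
  r13 : ℝ
  r14 : ℝ
  r23 : ℝ
  r24 : ℝ
  r34 : ℝ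

namespace Distances

def Pos (r : Distances) : Prop :=
  0 < r.r12 ∧ 0 < r.r13 ∧ 0 < r.r14 ∧ 0 < r.r23 ∧ 0 < r.r24 ∧ 0 < r.r34

def ptolemy (r : Distances) : ℝ := ptolemyFun r.r12 r.r13 r.r14 r.r23 r.r24 r.r34

noncomputable def inertia (m1 m2 m3 m4 : ℝ) (r : Distances) : ℝ :=
  momentInertia m1 m2 m3 m4 r.r12 r.r13 r.r14 r.r23 r.r24 r.r34

def scale (c : ℝ) (r : Distances) : Distances :=
  ⟨c * r.r12, c * r.r13, c * r.r14, c * r.r23, c * r.r24, c * r.r34⟩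

variable {c : ℝ} {r : Distances}

lemma Pos.scale (hr : r.Pos) (hc : 0 < c) : (r.scale c).Pos := by
  obtain ⟨h12, h13, h14, h23, h24, h34⟩ := hr
  exact ⟨mul_pos hc h12, mul_pos hc h13, mul_pos hc h14, mul_pos hc h23, mul_pos hc h24,
    mul_pos hc h34⟩

lemma ptolemy_scale : (r.scale c).ptolemy = c ^ 2 * r.ptolemy := by
  simp only [ptolemy, ptolemyFun, scale]
  ring

lemma inertia_scale (m1 m2 m3 m4 : ℝ) :
    (r.scale c).inertia m1 m2 m3 m4 = c ^ 2 * r.inertia m1 m2 m3 m4 := by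
  simp only [inertia, momentInertia, scale]
  ring

lemma scale_injective (hc : c ≠ 0) : Function.Injective (scale c) := by
  intro r s h
  simp only [scale, mk.injEq, mul_right_inj' hc] at h
  obtain ⟨h12, h13, h14, h23, h24, h34⟩ := h
  ext <;> assumption

lemma eq_of_scale_eq_scale {m1 m2 m3 m4 c' : ℝ} {s : Distances} (hc : 0 < c) (hc' : 0 < c')
    (hr : r.inertia m1 m2 m3 m4 = 1) (hs : s.inertia m1 m2 m3 m4 = 1)
    (h : r.scale c = s.scale c') : r = s := by
  have hsq : c ^ 2 = c' ^ 2 := by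
    simpa [inertia_scale, hr, hs] using congrArg (inertia m1 m2 m3 m4) h
  obtain rfl : c = c' := (sq_eq_sq₀ hc.le hc'.le).mp hsq
  exact scale_injective hc.ne' h

end Distances

open Distances

structure CCSystem (m1 m2 m3 m4 lam σ : ℝ) (r : Distances) : Prop where
  eq12 : m1 * m2 * phi lam r.r12 = σ * (r.r12 * r.r34)
  eq34 : m3 * m4 * phi lam r.r34 = σ * (r.r12 * r.r34)
  eq13 : m1 * m3 * phi lam r.r13 = -(σ * (r.r13 * r.r24))
  eq24 : m2 * m4 * phi lam r.r24 = -(σ * (r.r13 * r.r24))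
  eq14 : m1 * m4 * phi lam r.r14 = σ * (r.r14 * r.r23)
  eq23 : m2 * m3 * phi lam r.r23 = σ * (r.r14 * r.r23)

lemma mul_phi_eq_of_eq {K lam σ t u : ℝ} (ht : t ≠ 0)
    (h : K * (1 / t ^ 3 - lam) = σ * (u / t)) : K * phi lam t = σ * (t * u) := by
  have hphi : phi lam t = t ^ 2 * (1 / t ^ 3 - lam) := by
    unfold phi
    field_simp
  rw [hphi, mul_left_comm, h]
  field_simp

lemma mul_phi_div_pow_three_eq {K lam σ c t u : ℝ} (hc : c ≠ 0)
    (h : K * phi lam t = σ * (t * u)) :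
    K * phi (lam / c ^ 3) (c * t) = σ / c ^ 3 * (c * t * (c * u)) := by
  rw [phi_div_pow_three hc, mul_div_assoc', h]
  field_simp

variable {m1 m2 m3 m4 lam σ τ : ℝ} {r x y : Distances}

lemma CCSystem.of_cocircularCCEqns (hr : r.Pos)
    (h : cocircularCCEqns m1 m2 m3 m4 r.r12 r.r13 r.r14 r.r23 r.r24 r.r34 lam σ) :
    CCSystem m1 m2 m3 m4 lam σ r := by
  obtain ⟨h12, h13, h14, h23, h24, h34⟩ := hr
  obtain ⟨e12, e34, e13, e24, e14, e23⟩ := h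
  exact
    { eq12 := mul_phi_eq_of_eq h12.ne' e12
      eq34 := (mul_phi_eq_of_eq h34.ne' e34).trans (by ring)
      eq13 := (mul_phi_eq_of_eq h13.ne' e13).trans (by ring)
      eq24 := (mul_phi_eq_of_eq h24.ne' e24).trans (by ring)
      eq14 := mul_phi_eq_of_eq h14.ne' e14
      eq23 := (mul_phi_eq_of_eq h23.ne' e23).trans (by ring) }

lemma CCSystem.scale (h : CCSystem m1 m2 m3 m4 lam σ r) {c : ℝ} (hc : c ≠ 0) :
    CCSystem m1 m2 m3 m4 (lam / c ^ 3) (σ / c ^ 3) (r.scale c) where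
  eq12 := mul_phi_div_pow_three_eq hc h.eq12
  eq34 := (mul_phi_div_pow_three_eq (u := r.r12) hc (h.eq34.trans (by ring))).trans
    (by simp only [Distances.scale]; ring)
  eq13 := (mul_phi_div_pow_three_eq (σ := -σ) (u := r.r24) hc (h.eq13.trans (by ring))).trans
    (by simp only [Distances.scale]; ring)
  eq24 := (mul_phi_div_pow_three_eq (σ := -σ) (u := r.r13) hc (h.eq24.trans (by ring))).trans
    (by simp only [Distances.scale]; ring)
  eq14 := mul_phi_div_pow_three_eq hc h.eq14
  eq23 := (mul_phi_div_pow_three_eq (u := r.r14) hc (h.eq23.trans (by ring))).trans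
    (by simp only [Distances.scale]; ring)

lemma CCSystem.vertex_one (h : CCSystem m1 m2 m3 m4 lam σ r) :
    m1 * m2 * phi lam r.r12 + m1 * m3 * phi lam r.r13 + m1 * m4 * phi lam r.r14
      = σ * r.ptolemy := by
  rw [h.eq12, h.eq13, h.eq14, ptolemy, ptolemyFun]
  ring

lemma CCSystem.vertex_two (h : CCSystem m1 m2 m3 m4 lam σ r) :
    m1 * m2 * phi lam r.r12 + m2 * m3 * phi lam r.r23 + m2 * m4 * phi lam r.r24
      = σ * r.ptolemy := by
  rw [h.eq12, h.eq23, h.eq24, ptolemy, ptolemyFun]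
  ring

section PositiveMasses

variable (hm1 : 0 < m1) (hm2 : 0 < m2) (hm3 : 0 < m3) (hm4 : 0 < m4)
include hm1 hm2 hm3 hm4

lemma CCSystem.lam_pos (h : CCSystem m1 m2 m3 m4 lam σ r) (hr : r.Pos)
    (hP : r.ptolemy = 0) : 0 < lam := by
  obtain ⟨h12, h13, h14, -⟩ := hr
  by_contra! hlam
  have hsum := h.vertex_one
  rw [hP, mul_zero] at hsum
  have := add_pos (add_pos (mul_pos (mul_pos hm1 hm2) (phi_pos hlam h12))
    (mul_pos (mul_pos hm1 hm3) (phi_pos hlam h13))) (mul_pos (mul_pos hm1 hm4) (phi_pos hlam h14))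
  linarith

lemma CCSystem.exists_scale_normalized (h : CCSystem m1 m2 m3 m4 lam σ r) (hr : r.Pos)
    (hP : r.ptolemy = 0) : ∃ c > 0, ∃ σ', CCSystem m1 m2 m3 m4 1 σ' (r.scale c) := by
  have hlam := h.lam_pos hm1 hm2 hm3 hm4 hr hP
  set c := lam ^ ((3 : ℕ) : ℝ)⁻¹
  have hc : 0 < c := by positivity
  have hc3 : c ^ 3 = lam := Real.rpow_inv_natCast_pow hlam.le three_ne_zero
  refine ⟨c, hc, σ / c ^ 3, ?_⟩
  simpa only [hc3, div_self hlam.ne'] using h.scale hc.ne'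

lemma CCSystem.sig_pos (h : CCSystem m1 m2 m3 m4 1 σ r) (hr : r.Pos) (hP : r.ptolemy = 0) :
    0 < σ := by
  obtain ⟨h12, h13, h14, h23, h24, h34⟩ := hr
  by_contra! hσ
  have g12 := one_le_of_mul_phi_one_eq (mul_pos hm1 hm2) h12 (mul_pos h12 h34) hσ h.eq12
  have g34 := one_le_of_mul_phi_one_eq (mul_pos hm3 hm4) h34 (mul_pos h12 h34) hσ h.eq34
  have g14 := one_le_of_mul_phi_one_eq (mul_pos hm1 hm4) h14 (mul_pos h14 h23) hσ h.eq14
  have g23 := one_le_of_mul_phi_one_eq (mul_pos hm2 hm3) h23 (mul_pos h14 h23) hσ h.eq23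
  have g13 := le_one_of_mul_phi_one_eq_neg (mul_pos hm1 hm3) h13 (mul_pos h13 h24) hσ h.eq13
  have g24 := le_one_of_mul_phi_one_eq_neg (mul_pos hm2 hm4) h24 (mul_pos h13 h24) hσ h.eq24
  have := one_le_mul_of_one_le_of_one_le g12 g34
  have := one_le_mul_of_one_le_of_one_le g14 g23
  have := mul_le_one₀ g13 h24.le g24
  simp only [ptolemy, ptolemyFun] at hP
  linarith

lemma CCSystem.eq_of_le (hlam : 0 ≤ lam) (hx : CCSystem m1 m2 m3 m4 lam σ x)
    (hy : CCSystem m1 m2 m3 m4 lam τ y) (hxpos : x.Pos) (hypos : y.Pos)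
    (hxP : x.ptolemy = 0) (hyP : y.ptolemy = 0) (hτ : 0 < τ) (hστ : σ ≤ τ) : x = y := by
  have hφ := phi_strictAntiOn hlam
  obtain ⟨hx12, hx13, hx14, hx23, hx24, hx34⟩ := hxpos
  obtain ⟨hy12, hy13, hy14, hy23, hy24, hy34⟩ := hypos
  obtain ⟨l12, l34⟩ := le_and_le_of_pair_eq hφ (mul_pos hm1 hm2) (mul_pos hm3 hm4)
    hx12 hx34 hy12 hy34 hτ hστ hx.eq12 hx.eq34 hy.eq12 hy.eq34
  obtain ⟨l14, l23⟩ := le_and_le_of_pair_eq hφ (mul_pos hm1 hm4) (mul_pos hm2 hm3)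
    hx14 hx23 hy14 hy23 hτ hστ hx.eq14 hx.eq23 hy.eq14 hy.eq23
  have f12 := mul_le_mul_of_nonneg_left ((hφ.le_iff_ge hx12 hy12).mpr l12) (mul_pos hm1 hm2).le
  have f14 := mul_le_mul_of_nonneg_left ((hφ.le_iff_ge hx14 hy14).mpr l14) (mul_pos hm1 hm4).le
  have f23 := mul_le_mul_of_nonneg_left ((hφ.le_iff_ge hx23 hy23).mpr l23) (mul_pos hm2 hm3).le
  have l13 : x.r13 ≤ y.r13 := (hφ.le_iff_ge hy13 hx13).mp <|
    le_of_mul_le_mul_left (by linarith [hxP ▸ hx.vertex_one, hyP ▸ hy.vertex_one])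
      (mul_pos hm1 hm3)
  have l24 : x.r24 ≤ y.r24 := (hφ.le_iff_ge hy24 hx24).mp <|
    le_of_mul_le_mul_left (by linarith [hxP ▸ hx.vertex_two, hyP ▸ hy.vertex_two])
      (mul_pos hm2 hm4)
  simp only [ptolemy, ptolemyFun] at hxP hyP
  have p1 := mul_le_mul l12 l34 hy34.le hx12.le
  have p2 := mul_le_mul l14 l23 hy23.le hx14.le
  have p3 := mul_le_mul l13 l24 hx24.le hy13.le
  obtain ⟨e12, e34⟩ := eq_and_eq_of_mul_le_mul hy12 hy34 l12 l34 (by linarith)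
  obtain ⟨e14, e23⟩ := eq_and_eq_of_mul_le_mul hy14 hy23 l14 l23 (by linarith)
  obtain ⟨e13, e24⟩ := eq_and_eq_of_mul_le_mul hx13 hx24 l13 l24 (by linarith)
  ext
  exacts [e12.symm, e13, e14.symm, e23.symm, e24, e34.symm]

lemma CCSystem.eq_of_normalized (hx : CCSystem m1 m2 m3 m4 1 σ x)
    (hy : CCSystem m1 m2 m3 m4 1 τ y) (hxpos : x.Pos) (hypos : y.Pos)
    (hxP : x.ptolemy = 0) (hyP : y.ptolemy = 0) : x = y := by
  rcases le_total σ τ with hστ | hτσ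
  · exact hx.eq_of_le hm1 hm2 hm3 hm4 zero_le_one hy hxpos hypos hxP hyP
      (hy.sig_pos hm1 hm2 hm3 hm4 hypos hyP) hστ
  · exact (hy.eq_of_le hm1 hm2 hm3 hm4 zero_le_one hx hypos hxpos hyP hxP
      (hx.sig_pos hm1 hm2 hm3 hm4 hxpos hxP) hτσ).symm

end PositiveMasses

end CocircularCC

open CocircularCC CocircularCC.Distances

/-- There is at most one normalized sequentially-ordered co-circular central
configuration for each choice of positive masses. -/
theorem cocircular_cc_unique (m1 m2 m3 m4 : ℝ)
    (hm1 : 0 < m1) (hm2 : 0 < m2) (hm3 : 0 < m3) (hm4 : 0 < m4)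
    (r12 r13 r14 r23 r24 r34 s12 s13 s14 s23 s24 s34 : ℝ)
    (hrD : memD m1 m2 m3 m4 r12 r13 r14 r23 r24 r34)
    (hsD : memD m1 m2 m3 m4 s12 s13 s14 s23 s24 s34)
    (hrcc : ∃ lam sig : ℝ,
      cocircularCCEqns m1 m2 m3 m4 r12 r13 r14 r23 r24 r34 lam sig)
    (hscc : ∃ lam' sig' : ℝ,
      cocircularCCEqns m1 m2 m3 m4 s12 s13 s14 s23 s24 s34 lam' sig') :
    r12 = s12 ∧ r13 = s13 ∧ r14 = s14 ∧ r23 = s23 ∧ r24 = s24 ∧ r34 = s34 := by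
  obtain ⟨lam, sig, hr⟩ := hrcc
  obtain ⟨lam', sig', hs⟩ := hscc
  obtain ⟨⟨p12, p13, p14, p23, p24, p34, -⟩, hrI, hrP, -⟩ := hrD
  obtain ⟨⟨q12, q13, q14, q23, q24, q34, -⟩, hsI, hsP, -⟩ := hsD
  let x : Distances := ⟨r12, r13, r14, r23, r24, r34⟩
  let y : Distances := ⟨s12, s13, s14, s23, s24, s34⟩
  have hx : x.Pos := ⟨p12, p13, p14, p23, p24, p34⟩
  have hy : y.Pos := ⟨q12, q13, q14, q23, q24, q34⟩
  have hxP : x.ptolemy = 0 := hrP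
  have hyP : y.ptolemy = 0 := hsP
  obtain ⟨c, hc, σ, hxn⟩ :=
    (CCSystem.of_cocircularCCEqns hx hr).exists_scale_normalized hm1 hm2 hm3 hm4 hx hxP
  obtain ⟨c', hc', τ, hyn⟩ :=
    (CCSystem.of_cocircularCCEqns hy hs).exists_scale_normalized hm1 hm2 hm3 hm4 hy hyP
  have hscale : x.scale c = y.scale c' :=
    hxn.eq_of_normalized hm1 hm2 hm3 hm4 hyn (hx.scale hc) (hy.scale hc')
      (by rw [ptolemy_scale, hxP, mul_zero]) (by rw [ptolemy_scale, hyP, mul_zero])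
  have hxy : x = y := eq_of_scale_eq_scale hc hc' hrI hsI hscale
  simpa [x, y] using hxy
end

section
/- If r ∈ 𝒢 (r is geometrically realizable) and P(r) = 0, then K(r) = 0 and H(r) = 0; that is, on the set of geometrically realizable distance vectors satisfying Ptolemy's equality, the Cayley–Menger determinant vanishes, so the corresponding configuration of four bodies is coplanar. -/
/-- The function `K`. -/
def Kfun (r12 r13 r14 r23 r24 r34 : ℝ) : ℝ :=
  r12*r13*r23 - r12*r14*r24 + r13*r14*r34 - r23*r24*r34

/-! The Cayley–Menger determinant is a polynomial in the distances that differs from `-2 K²` by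
a multiple of the Ptolemy function `P`. Hence `P = 0` forces `H = -2 K² ≤ 0`, and together with
`H ≥ 0` this gives `K = 0` and `H = 0`. -/

theorem cayleyMenger_add_two_mul_Kfun_sq (r12 r13 r14 r23 r24 r34 : ℝ) :
    cayleyMenger r12 r13 r14 r23 r24 r34 + 2 * Kfun r12 r13 r14 r23 r24 r34 ^ 2 =
      2 * ptolemyFun r12 r13 r14 r23 r24 r34 *
        (r12 * r34 * (r13 ^ 2 + r24 ^ 2 + r14 ^ 2 + r23 ^ 2 - r12 ^ 2 - r34 ^ 2)
          + r14 * r23 * (r13 ^ 2 + r24 ^ 2 + r12 ^ 2 + r34 ^ 2 - r14 ^ 2 - r23 ^ 2)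
          + r13 * r24 * (r13 ^ 2 + r24 ^ 2 - r12 ^ 2 - r34 ^ 2 - r14 ^ 2 - r23 ^ 2)) := by
  simp [cayleyMenger, Kfun, ptolemyFun, Matrix.det_succ_row_zero, Fin.sum_univ_succ,
    Fin.succAbove]
  ring

theorem cayleyMenger_eq_neg_two_mul_Kfun_sq {r12 r13 r14 r23 r24 r34 : ℝ}
    (hP : ptolemyFun r12 r13 r14 r23 r24 r34 = 0) :
    cayleyMenger r12 r13 r14 r23 r24 r34 = -2 * Kfun r12 r13 r14 r23 r24 r34 ^ 2 := by
  have h := cayleyMenger_add_two_mul_Kfun_sq r12 r13 r14 r23 r24 r34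
  rw [hP, mul_zero, zero_mul] at h
  linarith

theorem Kfun_eq_zero_and_cayleyMenger_eq_zero {r12 r13 r14 r23 r24 r34 : ℝ}
    (hH : 0 ≤ cayleyMenger r12 r13 r14 r23 r24 r34)
    (hP : ptolemyFun r12 r13 r14 r23 r24 r34 = 0) :
    Kfun r12 r13 r14 r23 r24 r34 = 0 ∧ cayleyMenger r12 r13 r14 r23 r24 r34 = 0 := by
  have hHK := cayleyMenger_eq_neg_two_mul_Kfun_sq hP
  have hK : Kfun r12 r13 r14 r23 r24 r34 = 0 := by
    nlinarith [sq_nonneg (Kfun r12 r13 r14 r23 r24 r34)]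
  exact ⟨hK, by rw [hHK, hK]; ring⟩

/-- If `r ∈ 𝒢` and `P(r) = 0` then `K(r) = 0` and `H(r) = 0`:
geometrically realizable distance vectors satisfying Ptolemy's equality are
coplanar configurations. -/
theorem ptolemy_eq_implies_coplanar (r12 r13 r14 r23 r24 r34 : ℝ)
    (hG : geomRealizable r12 r13 r14 r23 r24 r34)
    (hP : ptolemyFun r12 r13 r14 r23 r24 r34 = 0) :
    Kfun r12 r13 r14 r23 r24 r34 = 0 ∧
      cayleyMenger r12 r13 r14 r23 r24 r34 = 0 :=
  Kfun_eq_zero_and_cayleyMenger_eq_zero hG.2.2.2.2.2.2.1 hP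
end

section
/- For every r ∈ 𝒫 = {r ∈ 𝒢 : P(r) = 0}, the gradients of the Cayley–Menger determinant and of the Ptolemy function are parallel: ∇H(r) = 2 Q(r) ∇P(r), where the gradient is taken with respect to the six variables (r₁₂, r₁₃, r₁₄, r₂₃, r₂₄, r₃₄). -/
/-- The Cayley–Menger determinant as a function of
`r = (r₁₂, r₁₃, r₁₄, r₂₃, r₂₄, r₃₄) ∈ ℝ⁶`. -/
noncomputable def Hvec (r : Fin 6 → ℝ) : ℝ :=
  Matrix.det !![(0:ℝ), 1, 1, 1, 1;
                1, 0, (r 0)^2, (r 1)^2, (r 2)^2;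
                1, (r 0)^2, 0, (r 3)^2, (r 4)^2;
                1, (r 1)^2, (r 3)^2, 0, (r 5)^2;
                1, (r 2)^2, (r 4)^2, (r 5)^2, 0]

/-- The Ptolemy function `P` as a function of `r ∈ ℝ⁶`. -/
def Pvec (r : Fin 6 → ℝ) : ℝ :=
  r 0 * r 5 + r 2 * r 3 - r 1 * r 4

/-- The function `Q` as a function of `r ∈ ℝ⁶`. -/
def Qvec (r : Fin 6 → ℝ) : ℝ :=
  r 0 * r 5 * (-(r 0)^2 - (r 5)^2 + (r 3)^2 + (r 2)^2 + (r 1)^2 + (r 4)^2)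
  + r 2 * r 3 * ((r 0)^2 + (r 5)^2 - (r 3)^2 - (r 2)^2 + (r 1)^2 + (r 4)^2)
  - r 1 * r 4 * ((r 0)^2 + (r 5)^2 + (r 3)^2 + (r 2)^2 - (r 1)^2 - (r 4)^2)

/-- Membership in `𝒢` for `r = (r₁₂, r₁₃, r₁₄, r₂₃, r₂₄, r₃₄) ∈ ℝ⁶`. -/
noncomputable def memG (r : Fin 6 → ℝ) : Prop :=
  (∀ i, 0 < r i) ∧ 0 ≤ Hvec r ∧
  r 0 + r 3 > r 1 ∧ r 0 + r 1 > r 3 ∧ r 1 + r 3 > r 0 ∧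
  r 0 + r 4 > r 2 ∧ r 0 + r 2 > r 4 ∧ r 2 + r 4 > r 0 ∧
  r 1 + r 5 > r 2 ∧ r 1 + r 2 > r 5 ∧ r 2 + r 5 > r 1 ∧
  r 3 + r 5 > r 4 ∧ r 3 + r 4 > r 5 ∧ r 4 + r 5 > r 3

/-! On `P = 0` the determinant `H = 2PQ - 2T²` is `-2T² ≤ 0`, so `H ≥ 0` forces `T = 0` as well.
At a common zero of `P` and `T` the gradient of `2PQ - 2T²` is `2Q∇P`. -/

/-- The alternating sum of the products of the side lengths of the faces `123, 124, 134, 234`. -/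
def Tvec (r : Fin 6 → ℝ) : ℝ :=
  r 0 * r 1 * r 3 - r 0 * r 2 * r 4 + r 1 * r 2 * r 5 - r 3 * r 4 * r 5

theorem Hvec_eq (r : Fin 6 → ℝ) : Hvec r = 2 * Pvec r * Qvec r - 2 * Tvec r ^ 2 := by
  simp only [Hvec, Fin.isValue, Matrix.det_succ_row_zero, Nat.succ_eq_add_one, Nat.reduceAdd,
    Matrix.of_apply, Matrix.cons_val', Matrix.cons_val_fin_one, Matrix.cons_val_zero,
    Matrix.submatrix_apply, Fin.succ_zero_eq_one, Fin.succAbove, Matrix.cons_val_one,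
    Matrix.submatrix_submatrix, Function.comp_apply, Fin.succ_one_eq_two, Matrix.cons_val,
    Fin.reduceSucc, Matrix.det_unique, Fin.default_eq_zero, Fin.castSucc_zero, Fin.sum_univ_succ,
    Fin.coe_ofNat_eq_mod, Nat.zero_mod, pow_zero, one_mul, lt_self_iff_false, ↓reduceIte,
    Fin.castSucc_one, Finset.univ_unique, Fin.val_succ, Fin.val_eq_zero, zero_add, pow_one,
    Fin.castSucc_succ, neg_mul, Fin.succ_pos, Finset.sum_neg_distrib, Finset.sum_singleton,
    not_lt_zero, Fin.reduceCastSucc, even_two, Even.neg_pow, one_pow, Fin.reduceLT, Fin.lt_one_iff,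
    Fin.reduceEq, mul_zero, mul_neg, zero_mul, neg_zero, neg_neg, add_zero, Matrix.cons_val_succ,
    mul_one, neg_add_rev, Pvec, Qvec, Tvec]
  ring

theorem differentiable_Pvec : Differentiable ℝ Pvec := by unfold Pvec; fun_prop

theorem differentiable_Qvec : Differentiable ℝ Qvec := by unfold Qvec; fun_prop

theorem differentiable_Tvec : Differentiable ℝ Tvec := by unfold Tvec; fun_prop

theorem hasFDerivAt_Hvec (r : Fin 6 → ℝ) :
    HasFDerivAt Hvec ((2 * Pvec r) • fderiv ℝ Qvec r + (2 * Qvec r) • fderiv ℝ Pvec r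
      - (4 * Tvec r) • fderiv ℝ Tvec r) r := by
  have hPQ := ((differentiable_Pvec r).hasFDerivAt.mul (differentiable_Qvec r).hasFDerivAt).const_mul 2
  have hT := ((differentiable_Tvec r).hasFDerivAt.pow 2).const_mul 2
  refine ((hPQ.sub hT).congr_of_eventuallyEq (.of_forall fun y => ?_)).congr_fderiv ?_
  · simp only [Hvec_eq, Pi.sub_apply, Pi.mul_apply]
    ring
  · ext v
    simp only [smul_add, Nat.add_one_sub_one, pow_one, nsmul_eq_mul, Nat.cast_ofNat,
      sub_apply, add_apply, smul_apply, smul_eq_mul]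
    ring

theorem Tvec_eq_zero_of_Pvec_eq_zero {r : Fin 6 → ℝ} (hH : 0 ≤ Hvec r) (hP : Pvec r = 0) :
    Tvec r = 0 := by
  rw [Hvec_eq, hP] at hH
  nlinarith [sq_nonneg (Tvec r)]

/-- On `𝒫 = {r ∈ 𝒢 : P(r) = 0}` the gradients of the Cayley–Menger
determinant `H` and of the Ptolemy function `P` are parallel:
`∇H(r) = 2 Q(r) ∇P(r)`. -/
theorem grad_H_parallel_grad_P (r : Fin 6 → ℝ)
    (hG : memG r) (hP : Pvec r = 0) :
    fderiv ℝ Hvec r = (2 * Qvec r) • fderiv ℝ Pvec r := by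
  rw [(hasFDerivAt_Hvec r).fderiv, hP, Tvec_eq_zero_of_Pvec_eq_zero hG.2.1 hP]
  simp only [mul_zero, zero_smul, zero_add, sub_zero]
end

section
/- For every r ∈ 𝒫 = {r ∈ 𝒢 : P(r) = 0}, the quantity Q(r) is nonzero; in fact 2Q(r) = (4/r_c²)·r₁₂r₁₃r₁₄r₂₃r₂₄r₃₄ > 0, where r_c is the circumradius of the cyclic quadrilateral determined by r; in particular Q(r) > 0. -/
/-- The function `Q`. -/
def Qfun (r12 r13 r14 r23 r24 r34 : ℝ) : ℝ :=
  r12*r34*(-r12^2 - r34^2 + r23^2 + r14^2 + r13^2 + r24^2)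
  + r14*r23*(r12^2 + r34^2 - r23^2 - r14^2 + r13^2 + r24^2)
  - r13*r24*(r12^2 + r34^2 + r23^2 + r14^2 - r13^2 - r24^2)

private lemma sin_plucker (a b c d : ℝ) :
    Real.sin (a-c) * Real.sin (b-d)
      = Real.sin (a-b) * Real.sin (c-d) + Real.sin (a-d) * Real.sin (b-c) := by
  simp only [Real.sin_sub]
  ring

private lemma exists_polar (ρ x y : ℝ) (hρ : 0 < ρ) (h : x^2 + y^2 = ρ^2) :
    ∃ φ : ℝ, x = ρ * Real.cos (2*φ) ∧ y = ρ * Real.sin (2*φ) := by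
  have hρ' : ρ ≠ 0 := ne_of_gt hρ
  have hx1 : -1 ≤ x/ρ := by rw [le_div_iff₀ hρ]; nlinarith
  have hx2 : x/ρ ≤ 1 := by rw [div_le_one hρ]; nlinarith
  have h1 : 1 - (x/ρ)^2 = (y/ρ)^2 := by field_simp; nlinarith
  rcases le_or_gt 0 y with hy | hy
  · refine ⟨Real.arccos (x/ρ) / 2, ?_, ?_⟩
    · rw [show 2*(Real.arccos (x/ρ)/2) = Real.arccos (x/ρ) by ring,
        Real.cos_arccos hx1 hx2]
      field_simp
    · rw [show 2*(Real.arccos (x/ρ)/2) = Real.arccos (x/ρ) by ring,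
        Real.sin_arccos, h1, Real.sqrt_sq (by positivity)]
      field_simp
  · refine ⟨-Real.arccos (x/ρ) / 2, ?_, ?_⟩
    · rw [show 2*(-Real.arccos (x/ρ)/2) = -Real.arccos (x/ρ) by ring,
        Real.cos_neg, Real.cos_arccos hx1 hx2]
      field_simp
    · rw [show 2*(-Real.arccos (x/ρ)/2) = -Real.arccos (x/ρ) by ring,
        Real.sin_neg, Real.sin_arccos, h1, Real.sqrt_sq_eq_abs,
        abs_of_neg (by exact div_neg_of_neg_of_pos hy hρ)]
      field_simp

private lemma chord (ρ a b : ℝ) (hρ : 0 ≤ ρ) :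
    Real.sqrt ((ρ*Real.cos (2*a) - ρ*Real.cos (2*b))^2
        + (ρ*Real.sin (2*a) - ρ*Real.sin (2*b))^2)
      = 2 * ρ * |Real.sin (a - b)| := by
  have key : (ρ*Real.cos (2*a) - ρ*Real.cos (2*b))^2
        + (ρ*Real.sin (2*a) - ρ*Real.sin (2*b))^2
      = (2 * ρ * |Real.sin (a - b)|)^2 := by
    have ha := Real.sin_sq_add_cos_sq a
    have hb := Real.sin_sq_add_cos_sq b
    rw [show (2 * ρ * |Real.sin (a - b)|)^2 = 4*ρ^2*(|Real.sin (a-b)|)^2 by ring,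
      sq_abs, Real.cos_two_mul a, Real.cos_two_mul b, Real.sin_two_mul a,
      Real.sin_two_mul b, Real.sin_sub]
    linear_combination (ρ^2*(4 - 8*(Real.cos b)^2 + 4*(Real.cos a)^2 - 4*(Real.sin b)^2)) * ha
      + (ρ^2*(-4 + 4*(Real.cos b)^2 + 4*(Real.sin a)^2)) * hb
  rw [key]
  exact Real.sqrt_sq (by positivity)


private lemma key_identity (a b c d : ℝ) :
    Real.sin (a-b) * Real.sin (c-d)
        * ((Real.sin (a-c))^2 + (Real.sin (b-d))^2 - (Real.sin (a-b))^2 - (Real.sin (c-d))^2)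
      + Real.sin (a-d) * Real.sin (b-c)
        * ((Real.sin (a-c))^2 + (Real.sin (b-d))^2 - (Real.sin (a-d))^2 - (Real.sin (b-c))^2)
      = 4 * (Real.sin (a-b) * Real.sin (c-d)) * (Real.sin (a-d) * Real.sin (b-c))
          * (Real.sin (a-b) * Real.sin (c-d) + Real.sin (a-d) * Real.sin (b-c)) := by
  have ha := Real.sin_sq_add_cos_sq a
  have hb := Real.sin_sq_add_cos_sq b
  have hc := Real.sin_sq_add_cos_sq c
  have hd := Real.sin_sq_add_cos_sq d
  simp only [Real.sin_sub]
  linear_combination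
    ((-1)*(Real.sin c)*(Real.sin d)^3*(Real.cos a)*(Real.cos b) + (1)*(Real.sin c)^3*(Real.sin d)*(Real.cos a)*(Real.cos b) + (1)*(Real.sin b)*(Real.sin d)^3*(Real.cos a)*(Real.cos c) + (-4)*(Real.sin b)*(Real.sin c)^2*(Real.sin d)^3*(Real.cos a)*(Real.cos b)^2*(Real.cos c) + (-1)*(Real.sin b)*(Real.sin c)^3*(Real.cos a)*(Real.cos d) + (4)*(Real.sin b)*(Real.sin c)^3*(Real.sin d)^2*(Real.cos a)*(Real.cos b)^2*(Real.cos d) + (4)*(Real.sin b)^2*(Real.sin c)*(Real.sin d)^3*(Real.cos a)*(Real.cos b)*(Real.cos c)^2 + (-4)*(Real.sin b)^2*(Real.sin c)^3*(Real.sin d)*(Real.cos a)*(Real.cos b)*(Real.cos d)^2 + (-1)*(Real.sin b)^3*(Real.sin d)*(Real.cos a)*(Real.cos c) + (1)*(Real.sin b)^3*(Real.sin c)*(Real.cos a)*(Real.cos d) + (-4)*(Real.sin b)^3*(Real.sin c)*(Real.sin d)^2*(Real.cos a)*(Real.cos c)^2*(Real.cos d) + (4)*(Real.sin b)^3*(Real.sin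 c)^2*(Real.sin d)*(Real.cos a)*(Real.cos c)*(Real.cos d)^2 + (3)*(Real.sin a)*(Real.sin c)*(Real.sin d)^2*(Real.cos b)*(Real.cos d) + (-3)*(Real.sin a)*(Real.sin c)^2*(Real.sin d)*(Real.cos b)*(Real.cos c) + (4)*(Real.sin a)*(Real.sin c)^2*(Real.sin d)^3*(Real.cos b)^3*(Real.cos c) + (-4)*(Real.sin a)*(Real.sin c)^3*(Real.sin d)^2*(Real.cos b)^3*(Real.cos d) + (-3)*(Real.sin a)*(Real.sin b)*(Real.sin d)^2*(Real.cos c)*(Real.cos d) + (3)*(Real.sin a)*(Real.sin b)*(Real.sin c)^2*(Real.cos c)*(Real.cos d) + (3)*(Real.sin a)*(Real.sin b)^2*(Real.sin d)*(Real.cos b)*(Real.cos c) + (-4)*(Real.sin a)*(Real.sin b)^2*(Real.sin d)^3*(Real.cos b)*(Real.cos c)^3 + (-3)*(Real.sin a)*(Real.sin b)^2*(Real.sin c)*(Real.cos b)*(Real.cos d) + (4)*(Real.sin a)*(Real.sin b)^2*(Real.sin c)^3*(Real.cos b)*(Real.cos d)^3 + (4)*(Real.sin a)*(Real.sin b)^3*(Real.sin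 d)^2*(Real.cos c)^3*(Real.cos d) + (-4)*(Real.sin a)*(Real.sin b)^3*(Real.sin c)^2*(Real.cos c)*(Real.cos d)^3) * ha
    + ((1)*(Real.sin c)*(Real.sin d)^3*(Real.cos a)*(Real.cos b) + (-1)*(Real.sin c)^3*(Real.sin d)*(Real.cos a)*(Real.cos b) + (-3)*(Real.sin b)*(Real.sin c)*(Real.sin d)^2*(Real.cos a)*(Real.cos d) + (3)*(Real.sin b)*(Real.sin c)^2*(Real.sin d)*(Real.cos a)*(Real.cos c) + (-4)*(Real.sin b)*(Real.sin c)^2*(Real.sin d)^3*(Real.cos a)*(Real.cos c) + (4)*(Real.sin b)*(Real.sin c)^3*(Real.sin d)^2*(Real.cos a)*(Real.cos d) + (-1)*(Real.sin a)*(Real.sin d)^3*(Real.cos b)*(Real.cos c) + (4)*(Real.sin a)*(Real.sin c)^2*(Real.sin d)^3*(Real.cos b)*(Real.cos c) + (1)*(Real.sin a)*(Real.sin c)^3*(Real.cos b)*(Real.cos d) + (-4)*(Real.sin a)*(Real.sin c)^3*(Real.sin d)^2*(Real.cos b)*(Real.cos d) + (3)*(Real.sin a)*(Real.sin b)*(Real.sin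 d)^2*(Real.cos c)*(Real.cos d) + (-3)*(Real.sin a)*(Real.sin b)*(Real.sin c)^2*(Real.cos c)*(Real.cos d) + (-4)*(Real.sin a)^2*(Real.sin c)*(Real.sin d)^3*(Real.cos a)*(Real.cos b)*(Real.cos c)^2 + (4)*(Real.sin a)^2*(Real.sin c)^3*(Real.sin d)*(Real.cos a)*(Real.cos b)*(Real.cos d)^2 + (-3)*(Real.sin a)^2*(Real.sin b)*(Real.sin d)*(Real.cos a)*(Real.cos c) + (4)*(Real.sin a)^2*(Real.sin b)*(Real.sin d)^3*(Real.cos a)*(Real.cos c)^3 + (3)*(Real.sin a)^2*(Real.sin b)*(Real.sin c)*(Real.cos a)*(Real.cos d) + (4)*(Real.sin a)^2*(Real.sin b)*(Real.sin c)^2*(Real.sin d)^3*(Real.cos a)*(Real.cos c) + (-4)*(Real.sin a)^2*(Real.sin b)*(Real.sin c)^3*(Real.cos a)*(Real.cos d)^3 + (-4)*(Real.sin a)^2*(Real.sin b)*(Real.sin c)^3*(Real.sin d)^2*(Real.cos a)*(Real.cos d) + (1)*(Real.sin a)^3*(Real.sin d)*(Real.cos b)*(Real.cos c) + (-1)*(Real.sin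 a)^3*(Real.sin c)*(Real.cos b)*(Real.cos d) + (4)*(Real.sin a)^3*(Real.sin c)*(Real.sin d)^2*(Real.cos b)*(Real.cos c)^2*(Real.cos d) + (-4)*(Real.sin a)^3*(Real.sin c)^2*(Real.sin d)*(Real.cos b)*(Real.cos c)*(Real.cos d)^2 + (-4)*(Real.sin a)^3*(Real.sin c)^2*(Real.sin d)^3*(Real.cos b)*(Real.cos c) + (4)*(Real.sin a)^3*(Real.sin c)^3*(Real.sin d)^2*(Real.cos b)*(Real.cos d) + (-4)*(Real.sin a)^3*(Real.sin b)*(Real.sin d)^2*(Real.cos c)^3*(Real.cos d) + (4)*(Real.sin a)^3*(Real.sin b)*(Real.sin c)^2*(Real.cos c)*(Real.cos d)^3) * hb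
    + ((-1)*(Real.sin b)*(Real.sin d)^3*(Real.cos a)*(Real.cos c) + (3)*(Real.sin b)*(Real.sin c)*(Real.sin d)^2*(Real.cos a)*(Real.cos d) + (-3)*(Real.sin b)^2*(Real.sin c)*(Real.sin d)*(Real.cos a)*(Real.cos b) + (4)*(Real.sin b)^2*(Real.sin c)*(Real.sin d)^3*(Real.cos a)*(Real.cos b) + (1)*(Real.sin b)^3*(Real.sin d)*(Real.cos a)*(Real.cos c) + (-4)*(Real.sin b)^3*(Real.sin c)*(Real.sin d)^2*(Real.cos a)*(Real.cos d) + (1)*(Real.sin a)*(Real.sin d)^3*(Real.cos b)*(Real.cos c) + (-3)*(Real.sin a)*(Real.sin c)*(Real.sin d)^2*(Real.cos b)*(Real.cos d) + (-4)*(Real.sin a)*(Real.sin b)^2*(Real.sin d)^3*(Real.cos b)*(Real.cos c) + (3)*(Real.sin a)*(Real.sin b)^2*(Real.sin c)*(Real.cos b)*(Real.cos d) + (-1)*(Real.sin a)*(Real.sin b)^3*(Real.cos c)*(Real.cos d) + (4)*(Real.sin a)*(Real.sin b)^3*(Real.sin d)^2*(Real.cos c)*(Real.cos d) + (3)*(Real.sin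 a)^2*(Real.sin c)*(Real.sin d)*(Real.cos a)*(Real.cos b) + (-4)*(Real.sin a)^2*(Real.sin c)*(Real.sin d)^3*(Real.cos a)*(Real.cos b) + (4)*(Real.sin a)^2*(Real.sin b)*(Real.sin d)^3*(Real.cos a)*(Real.cos c) + (-3)*(Real.sin a)^2*(Real.sin b)*(Real.sin c)*(Real.cos a)*(Real.cos d) + (-4)*(Real.sin a)^2*(Real.sin b)^3*(Real.sin d)*(Real.cos a)*(Real.cos c)*(Real.cos d)^2 + (-4)*(Real.sin a)^2*(Real.sin b)^3*(Real.sin d)^3*(Real.cos a)*(Real.cos c) + (4)*(Real.sin a)^2*(Real.sin b)^3*(Real.sin c)*(Real.cos a)*(Real.cos d)^3 + (4)*(Real.sin a)^2*(Real.sin b)^3*(Real.sin c)*(Real.sin d)^2*(Real.cos a)*(Real.cos d) + (-1)*(Real.sin a)^3*(Real.sin d)*(Real.cos b)*(Real.cos c) + (4)*(Real.sin a)^3*(Real.sin c)*(Real.sin d)^2*(Real.cos b)*(Real.cos d) + (1)*(Real.sin a)^3*(Real.sin b)*(Real.cos c)*(Real.cos d) + (-4)*(Real.sin a)^3*(Real.sin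 b)*(Real.sin d)^2*(Real.cos c)*(Real.cos d) + (4)*(Real.sin a)^3*(Real.sin b)^2*(Real.sin d)*(Real.cos b)*(Real.cos c)*(Real.cos d)^2 + (4)*(Real.sin a)^3*(Real.sin b)^2*(Real.sin d)^3*(Real.cos b)*(Real.cos c) + (-4)*(Real.sin a)^3*(Real.sin b)^2*(Real.sin c)*(Real.cos b)*(Real.cos d)^3 + (-4)*(Real.sin a)^3*(Real.sin b)^2*(Real.sin c)*(Real.sin d)^2*(Real.cos b)*(Real.cos d)) * hc
    + ((-3)*(Real.sin b)*(Real.sin c)^2*(Real.sin d)*(Real.cos a)*(Real.cos c) + (1)*(Real.sin b)*(Real.sin c)^3*(Real.cos a)*(Real.cos d) + (3)*(Real.sin b)^2*(Real.sin c)*(Real.sin d)*(Real.cos a)*(Real.cos b) + (-4)*(Real.sin b)^2*(Real.sin c)^3*(Real.sin d)*(Real.cos a)*(Real.cos b) + (-1)*(Real.sin b)^3*(Real.sin c)*(Real.cos a)*(Real.cos d) + (4)*(Real.sin b)^3*(Real.sin c)^2*(Real.sin d)*(Real.cos a)*(Real.cos c) + (3)*(Real.sin a)*(Real.sin c)^2*(Real.sin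 d)*(Real.cos b)*(Real.cos c) + (-1)*(Real.sin a)*(Real.sin c)^3*(Real.cos b)*(Real.cos d) + (-3)*(Real.sin a)*(Real.sin b)^2*(Real.sin d)*(Real.cos b)*(Real.cos c) + (4)*(Real.sin a)*(Real.sin b)^2*(Real.sin c)^3*(Real.cos b)*(Real.cos d) + (1)*(Real.sin a)*(Real.sin b)^3*(Real.cos c)*(Real.cos d) + (-4)*(Real.sin a)*(Real.sin b)^3*(Real.sin c)^2*(Real.cos c)*(Real.cos d) + (-3)*(Real.sin a)^2*(Real.sin c)*(Real.sin d)*(Real.cos a)*(Real.cos b) + (4)*(Real.sin a)^2*(Real.sin c)^3*(Real.sin d)*(Real.cos a)*(Real.cos b) + (3)*(Real.sin a)^2*(Real.sin b)*(Real.sin d)*(Real.cos a)*(Real.cos c) + (-4)*(Real.sin a)^2*(Real.sin b)*(Real.sin c)^3*(Real.cos a)*(Real.cos d) + (-4)*(Real.sin a)^2*(Real.sin b)^3*(Real.sin d)*(Real.cos a)*(Real.cos c) + (4)*(Real.sin a)^2*(Real.sin b)^3*(Real.sin c)*(Real.cos a)*(Real.cos d) + (1)*(Real.sin a)^3*(Real.sin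 c)*(Real.cos b)*(Real.cos d) + (-4)*(Real.sin a)^3*(Real.sin c)^2*(Real.sin d)*(Real.cos b)*(Real.cos c) + (-1)*(Real.sin a)^3*(Real.sin b)*(Real.cos c)*(Real.cos d) + (4)*(Real.sin a)^3*(Real.sin b)*(Real.sin c)^2*(Real.cos c)*(Real.cos d) + (4)*(Real.sin a)^3*(Real.sin b)^2*(Real.sin d)*(Real.cos b)*(Real.cos c) + (-4)*(Real.sin a)^3*(Real.sin b)^2*(Real.sin c)*(Real.cos b)*(Real.cos d)) * hd

set_option maxHeartbeats 1600000 in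
/-- For `r ∈ 𝒫 = {r ∈ 𝒢 : P(r) = 0}`, realized by four points on a common
circle of radius `ρ = r_c`, we have `2Q(r) = (4/r_c²)·∏ r_ij > 0`; in
particular `Q(r) > 0`. -/
theorem Q_pos_on_P (r12 r13 r14 r23 r24 r34 : ℝ)
    (hG : geomRealizable r12 r13 r14 r23 r24 r34)
    (hP : ptolemyFun r12 r13 r14 r23 r24 r34 = 0)
    (q : Fin 4 → EuclideanSpace ℝ (Fin 2)) (c : EuclideanSpace ℝ (Fin 2))
    (ρ : ℝ) (hρ : 0 < ρ) (honcircle : ∀ i, dist (q i) c = ρ)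
    (h12 : dist (q 0) (q 1) = r12) (h13 : dist (q 0) (q 2) = r13)
    (h14 : dist (q 0) (q 3) = r14) (h23 : dist (q 1) (q 2) = r23)
    (h24 : dist (q 1) (q 3) = r24) (h34 : dist (q 2) (q 3) = r34) :
    2 * Qfun r12 r13 r14 r23 r24 r34
        = (4/ρ^2) * (r12*r13*r14*r23*r24*r34) ∧
      0 < Qfun r12 r13 r14 r23 r24 r34 := by
  unfold geomRealizable at hG
  obtain ⟨hr12, hr13, hr14, hr23, hr24, hr34, -, -, -, -, -, -, -, -, -, -, -, -, -⟩ := hG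
  unfold ptolemyFun at hP
  have hρ0 : ρ ≠ 0 := ne_of_gt hρ
  -- coordinate form of distances
  have hcoord : ∀ (u v : EuclideanSpace ℝ (Fin 2)),
      dist u v = Real.sqrt ((u 0 - v 0)^2 + (u 1 - v 1)^2) := by
    intro u v
    rw [EuclideanSpace.dist_eq]
    congr 1
    simp [Fin.sum_univ_two, Real.dist_eq, sq_abs]
  -- angles
  have circle : ∀ i, ((q i) 0 - c 0)^2 + ((q i) 1 - c 1)^2 = ρ^2 := by
    intro i
    have h := honcircle i
    rw [hcoord] at h
    rw [← h, Real.sq_sqrt (by positivity)]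
  choose φ hx hy using fun i => exists_polar ρ _ _ hρ (circle i)
  -- chord lengths
  have echord : ∀ i j : Fin 4, dist (q i) (q j) = 2 * ρ * |Real.sin (φ i - φ j)| := by
    intro i j
    rw [hcoord]
    have e0 : (q i) 0 - (q j) 0 = ρ*Real.cos (2*φ i) - ρ*Real.cos (2*φ j) := by
      have hi := hx i; have hj := hx j; linarith
    have e1 : (q i) 1 - (q j) 1 = ρ*Real.sin (2*φ i) - ρ*Real.sin (2*φ j) := by
      have hi := hy i; have hj := hy j; linarith
    rw [e0, e1, chord ρ (φ i) (φ j) (le_of_lt hρ)]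
  have e12 : r12 = 2 * ρ * |Real.sin (φ 0 - φ 1)| := by rw [← h12, echord]
  have e13 : r13 = 2 * ρ * |Real.sin (φ 0 - φ 2)| := by rw [← h13, echord]
  have e14 : r14 = 2 * ρ * |Real.sin (φ 0 - φ 3)| := by rw [← h14, echord]
  have e23 : r23 = 2 * ρ * |Real.sin (φ 1 - φ 2)| := by rw [← h23, echord]
  have e24 : r24 = 2 * ρ * |Real.sin (φ 1 - φ 3)| := by rw [← h24, echord]
  have e34 : r34 = 2 * ρ * |Real.sin (φ 2 - φ 3)| := by rw [← h34, echord]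
  -- nonvanishing of sines
  have habs_pos : ∀ (r : ℝ) (x : ℝ), 0 < r → r = 2*ρ*|x| → x ≠ 0 := by
    intro r x hr he hx0
    rw [hx0, abs_zero, mul_zero] at he
    exact absurd (he ▸ hr) (lt_irrefl 0)
  have hs12 := habs_pos _ _ hr12 e12
  have hs13 := habs_pos _ _ hr13 e13
  have hs14 := habs_pos _ _ hr14 e14
  have hs23 := habs_pos _ _ hr23 e23
  have hs24 := habs_pos _ _ hr24 e24
  have hs34 := habs_pos _ _ hr34 e34
  have plucker := sin_plucker (φ 0) (φ 1) (φ 2) (φ 3)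
  -- Ptolemy in abs form
  have habs : |Real.sin (φ 0 - φ 1) * Real.sin (φ 2 - φ 3)|
      + |Real.sin (φ 0 - φ 3) * Real.sin (φ 1 - φ 2)|
      = |Real.sin (φ 0 - φ 2) * Real.sin (φ 1 - φ 3)| := by
    have h4 : (0:ℝ) < 4*ρ^2 := by positivity
    rw [abs_mul, abs_mul, abs_mul]
    have h0 : 4*ρ^2 * (|Real.sin (φ 0 - φ 1)| * |Real.sin (φ 2 - φ 3)|
        + |Real.sin (φ 0 - φ 3)| * |Real.sin (φ 1 - φ 2)|
        - |Real.sin (φ 0 - φ 2)| * |Real.sin (φ 1 - φ 3)|) = 0 := by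
      rw [e12, e34, e14, e23, e13, e24] at hP
      linear_combination hP
    have := (mul_eq_zero.mp h0).resolve_left (ne_of_gt h4)
    linarith
  -- same sign of the two products
  set p := Real.sin (φ 0 - φ 1) * Real.sin (φ 2 - φ 3) with hp_def
  set pq := Real.sin (φ 0 - φ 3) * Real.sin (φ 1 - φ 2) with hpq_def
  have hp0 : p ≠ 0 := mul_ne_zero hs12 hs34
  have hq0 : pq ≠ 0 := mul_ne_zero hs14 hs23
  have hsum : Real.sin (φ 0 - φ 2) * Real.sin (φ 1 - φ 3) = p + pq := plucker
  have h2 : (|p| + |pq|)^2 = (p + pq)^2 := by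
    rw [habs, hsum, sq_abs]
  have h3 : |p| * |pq| = p * pq := by
    linear_combination (h2 - sq_abs p - sq_abs pq)/2
  have hppq : 0 < p * pq := by
    rw [← h3]
    exact mul_pos (abs_pos.mpr hp0) (abs_pos.mpr hq0)
  -- squares of distances
  have sq_of : ∀ (r x : ℝ), r = 2*ρ*|x| → r^2 = 4*ρ^2*x^2 := by
    intro r x he
    rw [he, show (2*ρ*|x|)^2 = 4*ρ^2*|x|^2 by ring, sq_abs]
  have q12 := sq_of _ _ e12
  have q13 := sq_of _ _ e13
  have q14 := sq_of _ _ e14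
  have q23 := sq_of _ _ e23
  have q24 := sq_of _ _ e24
  have q34 := sq_of _ _ e34
  have key := key_identity (φ 0) (φ 1) (φ 2) (φ 3)
  rcases hp0.lt_or_gt with hp | hp
  · -- p < 0, hence pq < 0
    have hq : pq < 0 := ((mul_pos_iff.mp hppq).resolve_left
      (by rintro ⟨h, -⟩; exact absurd h (not_lt.2 hp.le))).2
    have hu : r12 * r34 = 4*ρ^2*(-p) := by
      rw [e12, e34, show 2*ρ*|Real.sin (φ 0 - φ 1)| * (2*ρ*|Real.sin (φ 2 - φ 3)|)
          = 4*ρ^2*(|Real.sin (φ 0 - φ 1)| * |Real.sin (φ 2 - φ 3)|) by ring,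
        ← abs_mul, ← hp_def, abs_of_neg hp]
    have hv : r14 * r23 = 4*ρ^2*(-pq) := by
      rw [e14, e23, show 2*ρ*|Real.sin (φ 0 - φ 3)| * (2*ρ*|Real.sin (φ 1 - φ 2)|)
          = 4*ρ^2*(|Real.sin (φ 0 - φ 3)| * |Real.sin (φ 1 - φ 2)|) by ring,
        ← abs_mul, ← hpq_def, abs_of_neg hq]
    have hw : r13 * r24 = 4*ρ^2*(-(p+pq)) := by
      rw [e13, e24, show 2*ρ*|Real.sin (φ 0 - φ 2)| * (2*ρ*|Real.sin (φ 1 - φ 3)|)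
          = 4*ρ^2*(|Real.sin (φ 0 - φ 2)| * |Real.sin (φ 1 - φ 3)|) by ring,
        ← abs_mul, hsum, abs_of_neg (by linarith)]
    have hQ : Qfun r12 r13 r14 r23 r24 r34 = 128*ρ^4*((-p)*(-pq)*(-(p+pq))) := by
      unfold Qfun
      rw [hu, hv, hw, q12, q13, q14, q23, q24, q34]
      linear_combination (-32*ρ^4) * key
    have hprod : r12*r13*r14*r23*r24*r34 = 64*ρ^6*((-p)*(-pq)*(-(p+pq))) := by
      rw [show r12*r13*r14*r23*r24*r34 = (r12*r34)*((r14*r23)*(r13*r24)) by ring,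
        hu, hv, hw]
      ring
    refine ⟨?_, ?_⟩
    · rw [hQ, hprod]
      field_simp
      ring
    · rw [hQ]
      exact mul_pos (by positivity)
        (mul_pos (mul_pos (by linarith) (by linarith)) (by linarith))
  · -- p > 0, hence pq > 0
    have hq : 0 < pq := ((mul_pos_iff.mp hppq).resolve_right
      (by rintro ⟨h, -⟩; exact absurd hp (not_lt.2 h.le))).2
    have hu : r12 * r34 = 4*ρ^2*p := by
      rw [e12, e34, show 2*ρ*|Real.sin (φ 0 - φ 1)| * (2*ρ*|Real.sin (φ 2 - φ 3)|)
          = 4*ρ^2*(|Real.sin (φ 0 - φ 1)| * |Real.sin (φ 2 - φ 3)|) by ring,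
        ← abs_mul, ← hp_def, abs_of_pos hp]
    have hv : r14 * r23 = 4*ρ^2*pq := by
      rw [e14, e23, show 2*ρ*|Real.sin (φ 0 - φ 3)| * (2*ρ*|Real.sin (φ 1 - φ 2)|)
          = 4*ρ^2*(|Real.sin (φ 0 - φ 3)| * |Real.sin (φ 1 - φ 2)|) by ring,
        ← abs_mul, ← hpq_def, abs_of_pos hq]
    have hw : r13 * r24 = 4*ρ^2*(p+pq) := by
      rw [e13, e24, show 2*ρ*|Real.sin (φ 0 - φ 2)| * (2*ρ*|Real.sin (φ 1 - φ 3)|)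
          = 4*ρ^2*(|Real.sin (φ 0 - φ 2)| * |Real.sin (φ 1 - φ 3)|) by ring,
        ← abs_mul, hsum, abs_of_pos (by linarith)]
    have hQ : Qfun r12 r13 r14 r23 r24 r34 = 128*ρ^4*(p*pq*(p+pq)) := by
      unfold Qfun
      rw [hu, hv, hw, q12, q13, q14, q23, q24, q34]
      linear_combination (32*ρ^4) * key
    have hprod : r12*r13*r14*r23*r24*r34 = 64*ρ^6*(p*pq*(p+pq)) := by
      rw [show r12*r13*r14*r23*r24*r34 = (r12*r34)*((r14*r23)*(r13*r24)) by ring,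
        hu, hv, hw]
      ring
    refine ⟨?_, ?_⟩
    · rw [hQ, hprod]
      field_simp
      ring
    · rw [hQ]
      exact mul_pos (by positivity) (mul_pos (mul_pos hp hq) (by linarith))
end

section
/- Suppose the positive masses m₁, m₂, m₃, m₄, a vector r ∈ (0,∞)⁶, and real numbers λ, σ satisfy the co-circular central configuration equations. Then λ > 0. -/
/-- For a co-circular central configuration the multiplier `λ` is positive. -/
theorem lambda_pos (m1 m2 m3 m4 r12 r13 r14 r23 r24 r34 lam sig : ℝ)
    (hm1 : 0 < m1) (hm2 : 0 < m2) (hm3 : 0 < m3) (hm4 : 0 < m4)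
    (h12 : 0 < r12) (h13 : 0 < r13) (h14 : 0 < r14)
    (h23 : 0 < r23) (h24 : 0 < r24) (h34 : 0 < r34)
    (hcc : cocircularCCEqns m1 m2 m3 m4 r12 r13 r14 r23 r24 r34 lam sig) :
    0 < lam := by
  obtain ⟨e12, e34, e13, e24, e14, e23⟩ := hcc
  rcases le_or_gt 0 sig with hs | hs
  · -- e13 : m1*m3*(1/r13^3 - lam) = -sig * (r24/r13) ≤ 0 ⇒ lam ≥ 1/r13^3 > 0
    have h1 : (0:ℝ) < 1/r13^3 := by positivity
    have h2 : -sig * (r24/r13) ≤ 0 := by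
      have : 0 ≤ sig * (r24/r13) := by positivity
      linarith
    nlinarith [mul_pos hm1 hm3]
  · have h1 : (0:ℝ) < 1/r12^3 := by positivity
    have h2 : sig * (r34/r12) ≤ 0 := by
      have h3 : 0 < r34/r12 := by positivity
      nlinarith
    nlinarith [mul_pos hm1 hm2]
end

section
/- Suppose the positive masses m₁, m₂, m₃, m₄, a vector r ∈ (0,∞)⁶, and real numbers λ, σ satisfy the co-circular central configuration equations. Then σ² = m₁m₂m₃m₄ (r₁₂⁻³ − λ)(r₃₄⁻³ − λ) = m₁m₂m₃m₄ (r₁₄⁻³ − λ)(r₂₃⁻³ − λ) = m₁m₂m₃m₄ (r₁₃⁻³ − λ)(r₂₄⁻³ − λ); in particular Dziobek's relation holds: (r₁₂⁻³ − λ)(r₃₄⁻³ − λ) = (r₁₃⁻³ − λ)(r₂₄⁻³ − λ) = (r₁₄⁻³ − λ)(r₂₃⁻³ − λ). -/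
/-- The three expressions for `σ²` and Dziobek's relation. -/
theorem sigma_sq_and_dziobek (m1 m2 m3 m4 r12 r13 r14 r23 r24 r34 lam sig : ℝ)
    (hm1 : 0 < m1) (hm2 : 0 < m2) (hm3 : 0 < m3) (hm4 : 0 < m4)
    (h12 : 0 < r12) (h13 : 0 < r13) (h14 : 0 < r14)
    (h23 : 0 < r23) (h24 : 0 < r24) (h34 : 0 < r34)
    (hcc : cocircularCCEqns m1 m2 m3 m4 r12 r13 r14 r23 r24 r34 lam sig) :
    (sig^2 = m1*m2*m3*m4 * (1/r12^3 - lam) * (1/r34^3 - lam) ∧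
     sig^2 = m1*m2*m3*m4 * (1/r14^3 - lam) * (1/r23^3 - lam) ∧
     sig^2 = m1*m2*m3*m4 * (1/r13^3 - lam) * (1/r24^3 - lam)) ∧
    ((1/r12^3 - lam) * (1/r34^3 - lam) = (1/r13^3 - lam) * (1/r24^3 - lam) ∧
     (1/r13^3 - lam) * (1/r24^3 - lam) = (1/r14^3 - lam) * (1/r23^3 - lam)) := by
  obtain ⟨e1, e2, e3, e4, e5, e6⟩ := hcc
  have n12 := h12.ne'
  have n13 := h13.ne'
  have n14 := h14.ne'
  have n23 := h23.ne'
  have n24 := h24.ne'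
  have n34 := h34.ne'
  have hM : m1*m2*m3*m4 ≠ 0 := by positivity
  have k1 : sig^2 = m1*m2*m3*m4 * (1/r12^3 - lam) * (1/r34^3 - lam) := by
    rw [show m1*m2*m3*m4*(1/r12^3-lam)*(1/r34^3-lam)
        = (m1*m2*(1/r12^3-lam))*(m3*m4*(1/r34^3-lam)) by ring, e1, e2]
    field_simp
  have k2 : sig^2 = m1*m2*m3*m4 * (1/r14^3 - lam) * (1/r23^3 - lam) := by
    rw [show m1*m2*m3*m4*(1/r14^3-lam)*(1/r23^3-lam)
        = (m1*m4*(1/r14^3-lam))*(m2*m3*(1/r23^3-lam)) by ring, e5, e6]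
    field_simp
  have k3 : sig^2 = m1*m2*m3*m4 * (1/r13^3 - lam) * (1/r24^3 - lam) := by
    rw [show m1*m2*m3*m4*(1/r13^3-lam)*(1/r24^3-lam)
        = (m1*m3*(1/r13^3-lam))*(m2*m4*(1/r24^3-lam)) by ring, e3, e4]
    field_simp
  refine ⟨⟨k1, k2, k3⟩, ?_, ?_⟩
  · have h := k1.symm.trans k3
    exact mul_left_cancel₀ hM (by linarith [h])
  · have h := k3.symm.trans k2
    exact mul_left_cancel₀ hM (by linarith [h])
end
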